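/- arXiv:1809.09416 — 2 statements merged into one kernel-verified Lean document; each statement's English description precedes it below -/
import Mathlib

section
/- For N equally spaced points on a circle of radius R > 0 in the plane, the logarithmic energy Σ_{i≠j} log‖x_i − x_j‖^{−1} equals −N log N − N(N−1) log R. -/
/-!
With `ζ = exp (2πi/N)` the points are `R ζ^k`, so each of the `N (N - 1)` pairs contributes
`-log R - log ‖ζ^i - ζ^j‖`. For fixed `i`, the product `∏_{j ≠ i} (ζ^i - ζ^j)` is the derivative
of `X^N - 1 = ∏_j (X - ζ^j)` at its root `ζ^i`, namely `N ζ^{i(N-1)}`, which has norm `N`.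
-/

open Real Complex

open Polynomial in
theorem Polynomial.eval_derivative_finset_prod_X_sub_C {R ι : Type*} [CommRing R]
    [DecidableEq ι] {s : Finset ι} (a : ι → R) {x : ι} (hx : x ∈ s) :
    eval (a x) (derivative (∏ i ∈ s, (X - C (a i)))) = ∏ i ∈ s.erase x, (a x - a i) := by
  rw [← Finset.mul_prod_erase s _ hx, derivative_mul]
  simp [eval_prod]

namespace IsPrimitiveRoot

open Polynomial in
theorem prod_pow_sub_pow_erase {R : Type*} [CommRing R] [IsDomain R] {ζ : R} {N i : ℕ}
    (hζ : IsPrimitiveRoot ζ N) (hi : i < N) :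
    ∏ j ∈ (Finset.range N).erase i, (ζ ^ i - ζ ^ j) = N * ζ ^ (i * (N - 1)) := by
  have hsplit := X_pow_sub_C_eq_prod hζ (α := 1) (by omega) (one_pow N)
  simp only [mul_one, map_one] at hsplit
  rw [← eval_derivative_finset_prod_X_sub_C (ζ ^ ·) (Finset.mem_range.2 hi), ← hsplit]
  simp [derivative_X_pow, pow_mul]

theorem pow_sub_pow_ne_zero {R : Type*} [CommRing R] {ζ : R} {N i j : ℕ}
    (hζ : IsPrimitiveRoot ζ N) (hi : i < N) (hj : j < N) (hji : j ≠ i) : ζ ^ i - ζ ^ j ≠ 0 :=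
  sub_ne_zero.2 fun h => hji (hζ.pow_inj hi hj h).symm

theorem sum_log_norm_pow_sub_pow {ζ : ℂ} {N i : ℕ} (hζ : IsPrimitiveRoot ζ N) (hi : i < N) :
    ∑ j ∈ (Finset.range N).erase i, Real.log ‖ζ ^ i - ζ ^ j‖ = Real.log N := by
  have hne : ∀ j ∈ (Finset.range N).erase i, ‖ζ ^ i - ζ ^ j‖ ≠ 0 := by
    intro j hj
    rw [Finset.mem_erase, Finset.mem_range] at hj
    exact norm_ne_zero_iff.2 (hζ.pow_sub_pow_ne_zero hi hj.2 hj.1)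
  rw [← Real.log_prod hne, ← norm_prod, hζ.prod_pow_sub_pow_erase hi, norm_mul, norm_pow,
    hζ.norm'_eq_one (by omega), one_pow, mul_one, Complex.norm_natCast]

theorem sum_log_inv_norm_mul_pow_sub {ζ : ℂ} {N i : ℕ} (hζ : IsPrimitiveRoot ζ N) (hi : i < N)
    {R : ℝ} (hR : 0 < R) :
    ∑ j ∈ (Finset.range N).erase i, Real.log ‖(R : ℂ) * ζ ^ i - R * ζ ^ j‖⁻¹
      = -Real.log N - ((N : ℝ) - 1) * Real.log R := by
  have hterm : ∀ j ∈ (Finset.range N).erase i, Real.log ‖(R : ℂ) * ζ ^ i - R * ζ ^ j‖⁻¹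
      = -(Real.log R + Real.log ‖ζ ^ i - ζ ^ j‖) := by
    intro j hj
    rw [Finset.mem_erase, Finset.mem_range] at hj
    rw [← mul_sub, norm_mul, Complex.norm_real, Real.norm_of_nonneg hR.le, Real.log_inv,
      Real.log_mul hR.ne' (norm_ne_zero_iff.2 (hζ.pow_sub_pow_ne_zero hi hj.2 hj.1))]
  rw [Finset.sum_congr rfl hterm, Finset.sum_neg_distrib, Finset.sum_add_distrib,
    hζ.sum_log_norm_pow_sub_pow hi, Finset.sum_const, Finset.card_erase_of_mem
    (Finset.mem_range.2 hi), Finset.card_range, nsmul_eq_mul, Nat.cast_pred (by omega)]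
  ring

end IsPrimitiveRoot

theorem stmt4_general (N : ℕ) (R : ℝ) (hR : 0 < R) :
    ∑ i ∈ Finset.range N, ∑ j ∈ Finset.range N,
      (if i ≠ j then
        Real.log (‖(R : ℂ) * Complex.exp (2 * Real.pi * Complex.I * i / N) -
          (R : ℂ) * Complex.exp (2 * Real.pi * Complex.I * j / N)‖)⁻¹ else 0)
      = -(N : ℝ) * Real.log N - (N : ℝ) * ((N : ℝ) - 1) * Real.log R := by
  have hexp (k : ℕ) : Complex.exp (2 * π * I * k / N) = Complex.exp (2 * π * I / N) ^ k := by
    rw [← Complex.exp_nat_mul]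
    ring_nf
  have hrow : ∀ i ∈ Finset.range N, ∑ j ∈ Finset.range N,
      (if i ≠ j then Real.log (‖(R : ℂ) * Complex.exp (2 * π * I * i / N) -
        (R : ℂ) * Complex.exp (2 * π * I * j / N)‖)⁻¹ else 0)
        = -Real.log N - ((N : ℝ) - 1) * Real.log R := by
    intro i hi
    rw [Finset.mem_range] at hi
    rw [← Finset.sum_filter, Finset.filter_ne]
    simp only [hexp]
    exact (Complex.isPrimitiveRoot_exp N (by omega)).sum_log_inv_norm_mul_pow_sub hi hR
  rw [Finset.sum_congr rfl hrow, Finset.sum_const, Finset.card_range, nsmul_eq_mul]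
  ring

theorem stmt4 (N : ℕ) (hN : 1 ≤ N) (R : ℝ) (hR : 0 < R) :
    ∑ i ∈ Finset.range N, ∑ j ∈ Finset.range N,
      (if i ≠ j then
        Real.log (‖(R : ℂ) * Complex.exp (2 * Real.pi * Complex.I * i / N) -
          (R : ℂ) * Complex.exp (2 * Real.pi * Complex.I * j / N)‖)⁻¹ else 0)
      = -(N : ℝ) * Real.log N - (N : ℝ) * ((N : ℝ) - 1) * Real.log R :=
  stmt4_general N R hR
end

section
/- Let x_j^i = (√(1−z_j²) cos(2πi/r_j + θ_j), √(1−z_j²) sin(2πi/r_j + θ_j), z_j) for 1 ≤ i ≤ r_j. Then the average over (θ_j, θ_k) ∈ [0,2π]² of −Σ_{l=1}^{r_k} Σ_{i=1}^{r_j} log‖x_j^i − x_k^l‖ equals −r_j r_k (1/2) log(1 − z_j z_k + |z_j − z_k|), provided z_j ≠ z_k. -/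
/-!
Write `s = √(1 - z_j²)`, `t = √(1 - z_k²)`. The squared distance between two points of the
latitude circles is `A - B cos(β - α)` with `A = 2 - 2 z_j z_k` and `B = 2 s t`, and `|B| < A`
because `A² - B² = 4 (z_j - z_k)²`. Factoring `A - B cos θ = c |e^{iθ} - ρ|²` with `|ρ| ≤ 1`,
the mean value of `log |e^{iθ} - ρ|` over the circle vanishes, so the mean of
`log (A - B cos θ)` is `log c = log ((A + √(A² - B²)) / 2) = log (1 - z_j z_k + |z_j - z_k|)`,
independently of the phase. Every one of the `r_j r_k` terms therefore contributes the same.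
-/

open Real

theorem integral_log_one_sub_two_mul_cos_add_sq {ρ : ℝ} (hρ : |ρ| ≤ 1) (φ : ℝ) :
    ∫ θ in 0..2 * π, log (1 - 2 * ρ * cos (θ + φ) + ρ ^ 2) = 0 := by
  have hnorm (θ : ℝ) : 1 - 2 * ρ * cos θ + ρ ^ 2 = ‖circleMap 0 1 θ - ρ‖ ^ 2 := by
    rw [← Complex.normSq_eq_norm_sq, Complex.normSq_apply]
    simp only [circleMap, zero_add, Complex.ofReal_one, one_mul, Complex.sub_re, Complex.sub_im,
      Complex.exp_ofReal_mul_I_re, Complex.exp_ofReal_mul_I_im, Complex.ofReal_re, Complex.ofReal_im]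
    linear_combination -sin_sq_add_cos_sq θ
  have h := circleAverage_log_norm_sub_const_of_mem_closedBall (a := (ρ : ℂ)) (c := 0) (R := 1)
    (by simpa using hρ)
  rw [circleAverage_eq_integral_add φ, log_one, smul_eq_zero] at h
  simp only [hnorm, log_pow, intervalIntegral.integral_const_mul]
  simp [h.resolve_left (by positivity)]

theorem sub_mul_cos_pos {A B : ℝ} (h : |B| < A) (θ : ℝ) : 0 < A - B * cos θ := by
  nlinarith [abs_le.1 (abs_cos_le_one θ), neg_abs_le B, le_abs_self B]

theorem continuous_log_sub_mul_cos_add {A B : ℝ} (h : |B| < A) (φ : ℝ) :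
    Continuous fun θ => log (A - B * cos (θ + φ)) :=
  Continuous.log (by fun_prop) fun θ => (sub_mul_cos_pos h _).ne'

theorem integral_log_sub_mul_cos_add {A B : ℝ} (h : |B| < A) (φ : ℝ) :
    ∫ θ in 0..2 * π, log (A - B * cos (θ + φ)) = 2 * π * log ((A + √(A ^ 2 - B ^ 2)) / 2) := by
  set s := √(A ^ 2 - B ^ 2)
  have hs : s ^ 2 = A ^ 2 - B ^ 2 := sq_sqrt (by nlinarith [sq_abs B, abs_nonneg B])
  have hA : 0 < A + s := by linarith [(abs_nonneg B).trans_lt h, sqrt_nonneg (A ^ 2 - B ^ 2)]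
  -- `ρ = (A - s) / B` is the root of `B ρ² - 2 A ρ + B` in the closed unit disc.
  set ρ := B / (A + s)
  have hρ : |ρ| ≤ 1 := by
    rw [abs_div, abs_of_pos hA, div_le_one hA]
    linarith [sqrt_nonneg (A ^ 2 - B ^ 2)]
  have hfactor (θ : ℝ) :
      A - B * cos (θ + φ) = (A + s) / 2 * (1 - 2 * ρ * cos (θ + φ) + ρ ^ 2) := by
    have := hA.ne'
    simp only [ρ]
    field_simp
    linear_combination -hs
  have hpos (θ : ℝ) : 0 < 1 - 2 * ρ * cos (θ + φ) + ρ ^ 2 := by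
    have := sub_mul_cos_pos h (θ + φ)
    rw [hfactor] at this
    exact pos_of_mul_pos_right this (half_pos hA).le
  have hint : IntervalIntegrable (fun θ => log (1 - 2 * ρ * cos (θ + φ) + ρ ^ 2))
      MeasureTheory.volume 0 (2 * π) :=
    (Continuous.log (by fun_prop) fun θ => (hpos θ).ne').intervalIntegrable _ _
  simp only [hfactor, log_mul (half_pos hA).ne' (hpos _).ne']
  rw [intervalIntegral.integral_add intervalIntegrable_const hint,
    integral_log_one_sub_two_mul_cos_add_sq hρ, intervalIntegral.integral_const, smul_eq_mul]
  ring

theorem norm_sub_sq_of_ofLp_eq {p q : EuclideanSpace ℝ (Fin 3)} {s t z w α β : ℝ}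
    (hp : p.ofLp = ![s * cos α, s * sin α, z]) (hq : q.ofLp = ![t * cos β, t * sin β, w]) :
    ‖p - q‖ ^ 2 = s ^ 2 + t ^ 2 + (z - w) ^ 2 - 2 * s * t * cos (α - β) := by
  rw [EuclideanSpace.norm_sq_eq, Fin.sum_univ_three]
  simp only [PiLp.sub_apply, hp, hq, Matrix.cons_val_zero, Matrix.cons_val_one,
    Matrix.cons_val_two, Matrix.head_cons, Matrix.tail_cons, Real.norm_eq_abs, sq_abs, cos_sub]
  linear_combination s ^ 2 * sin_sq_add_cos_sq α + t ^ 2 * sin_sq_add_cos_sq β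

theorem log_norm_sub_of_ofLp_eq {p q : EuclideanSpace ℝ (Fin 3)} {a b α β : ℝ}
    (ha : a ∈ Set.Icc (-1) 1) (hb : b ∈ Set.Icc (-1) 1)
    (hp : p.ofLp = ![√(1 - a ^ 2) * cos α, √(1 - a ^ 2) * sin α, a])
    (hq : q.ofLp = ![√(1 - b ^ 2) * cos β, √(1 - b ^ 2) * sin β, b]) :
    log ‖p - q‖ =
      1 / 2 * log (2 - 2 * a * b - 2 * (√(1 - a ^ 2) * √(1 - b ^ 2)) * cos (α - β)) := by
  have hsq := norm_sub_sq_of_ofLp_eq hp hq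
  rw [sq_sqrt (by nlinarith [ha.1, ha.2]), sq_sqrt (by nlinarith [hb.1, hb.2])] at hsq
  rw [show 2 - 2 * a * b - _ = ‖p - q‖ ^ 2 by rw [hsq]; ring, log_pow]
  ring

theorem sqrt_one_sub_sq_mul_sqrt_one_sub_sq_lt {a b : ℝ} (ha : a ∈ Set.Icc (-1) 1)
    (hb : b ∈ Set.Icc (-1) 1) (hab : a ≠ b) : √(1 - a ^ 2) * √(1 - b ^ 2) < 1 - a * b := by
  have hsq : (1 - a ^ 2) * (1 - b ^ 2) = (1 - a * b) ^ 2 - (a - b) ^ 2 := by ring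
  have hpos : 0 < (a - b) ^ 2 := by positivity
  rw [← sqrt_mul (by nlinarith [ha.1, ha.2]), sqrt_lt' (by nlinarith [ha.1, ha.2, hb.1, hb.2])]
  linarith

theorem sqrt_sq_sub_sq_of_mem_Icc {a b : ℝ} (ha : a ∈ Set.Icc (-1) 1) (hb : b ∈ Set.Icc (-1) 1) :
    √((2 - 2 * a * b) ^ 2 - (2 * (√(1 - a ^ 2) * √(1 - b ^ 2))) ^ 2) = 2 * |a - b| := by
  rw [mul_pow, mul_pow, sq_sqrt (by nlinarith [ha.1, ha.2]), sq_sqrt (by nlinarith [hb.1, hb.2]),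
    ← sqrt_sq (by positivity : 0 ≤ 2 * |a - b|), mul_pow, sq_abs]
  ring_nf

theorem stmt6_general (zj zk : ℝ) (hj : zj ∈ Set.Ioo (-1:ℝ) 1) (hk : zk ∈ Set.Ioo (-1:ℝ) 1)
    (hne : zj ≠ zk) (rj rk : ℕ)
    (x : ℝ → ℕ → EuclideanSpace ℝ (Fin 3)) (y : ℝ → ℕ → EuclideanSpace ℝ (Fin 3))
    (hx : ∀ θ i, x θ i = ![Real.sqrt (1 - zj ^ 2) * Real.cos (2 * π * i / rj + θ),
      Real.sqrt (1 - zj ^ 2) * Real.sin (2 * π * i / rj + θ), zj])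
    (hy : ∀ θ l, y θ l = ![Real.sqrt (1 - zk ^ 2) * Real.cos (2 * π * l / rk + θ),
      Real.sqrt (1 - zk ^ 2) * Real.sin (2 * π * l / rk + θ), zk]) :
    (1 / (4 * π ^ 2)) *
      ∫ θj in (0:ℝ)..(2 * π), ∫ θk in (0:ℝ)..(2 * π),
        -∑ l ∈ Finset.Icc 1 rk, ∑ i ∈ Finset.Icc 1 rj, Real.log ‖x θj i - y θk l‖
      = -(rj : ℝ) * (rk : ℝ) * ((1 / 2) * Real.log (1 - zj * zk + |zj - zk|)) := by
  have hj' := Set.Ioo_subset_Icc_self hj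
  have hk' := Set.Ioo_subset_Icc_self hk
  set A := 2 - 2 * zj * zk
  set B := 2 * (√(1 - zj ^ 2) * √(1 - zk ^ 2))
  have hBA : |B| < A := by
    rw [abs_of_nonneg (by positivity)]
    linarith [sqrt_one_sub_sq_mul_sqrt_one_sub_sq_lt hj' hk' hne]
  have hL : (A + √(A ^ 2 - B ^ 2)) / 2 = 1 - zj * zk + |zj - zk| := by
    simp only [A, B]
    rw [sqrt_sq_sub_sq_of_mem_Icc hj' hk']
    ring
  have hlog (θj θk : ℝ) (i l : ℕ) : log ‖x θj i - y θk l‖ =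
      1 / 2 * log (A - B * cos (θk + (2 * π * l / rk - (2 * π * i / rj + θj)))) := by
    rw [log_norm_sub_of_ofLp_eq hj' hk' (hx θj i) (hy θk l), ← cos_neg]
    simp only [A, B]
    ring_nf
  have hc (φ : ℝ) := (continuous_log_sub_mul_cos_add hBA φ).const_mul (1 / 2)
  have hinner (θj : ℝ) : ∫ θk in 0..2 * π, -∑ l ∈ Finset.Icc 1 rk, ∑ i ∈ Finset.Icc 1 rj,
      log ‖x θj i - y θk l‖ = -(rk * (rj * (π * log (1 - zj * zk + |zj - zk|)))) := by
    simp only [hlog]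
    rw [intervalIntegral.integral_neg, intervalIntegral.integral_finsetSum fun l _ =>
      (continuous_finsetSum _ fun i _ => hc _).intervalIntegrable _ _]
    simp only [intervalIntegral.integral_finsetSum fun i _ => (hc _).intervalIntegrable _ _,
      intervalIntegral.integral_const_mul, integral_log_sub_mul_cos_add hBA, hL,
      Finset.sum_const, Nat.card_Icc, Nat.add_sub_cancel, nsmul_eq_mul]
    ring
  rw [intervalIntegral.integral_congr fun θj _ => hinner θj, intervalIntegral.integral_const,
    smul_eq_mul]
  field_simp
  ring

theorem stmt6 (zj zk : ℝ) (hj : zj ∈ Set.Ioo (-1:ℝ) 1) (hk : zk ∈ Set.Ioo (-1:ℝ) 1)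
    (hne : zj ≠ zk) (rj rk : ℕ) (hrj : 0 < rj) (hrk : 0 < rk)
    (x : ℝ → ℕ → EuclideanSpace ℝ (Fin 3)) (y : ℝ → ℕ → EuclideanSpace ℝ (Fin 3))
    (hx : ∀ θ i, x θ i = ![Real.sqrt (1 - zj ^ 2) * Real.cos (2 * π * i / rj + θ),
      Real.sqrt (1 - zj ^ 2) * Real.sin (2 * π * i / rj + θ), zj])
    (hy : ∀ θ l, y θ l = ![Real.sqrt (1 - zk ^ 2) * Real.cos (2 * π * l / rk + θ),
      Real.sqrt (1 - zk ^ 2) * Real.sin (2 * π * l / rk + θ), zk]) :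
    (1 / (4 * π ^ 2)) *
      ∫ θj in (0:ℝ)..(2 * π), ∫ θk in (0:ℝ)..(2 * π),
        -∑ l ∈ Finset.Icc 1 rk, ∑ i ∈ Finset.Icc 1 rj, Real.log ‖x θj i - y θk l‖
      = -(rj : ℝ) * (rk : ℝ) * ((1 / 2) * Real.log (1 - zj * zk + |zj - zk|)) :=
  stmt6_general zj zk hj hk hne rj rk x y hx hy
end
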